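/- arXiv:1911.04807 — 2 statements merged into one kernel-verified Lean document; each statement's English description precedes it below -/
import Mathlib

section
/- Let (X, d, μ) be a metric measure space, let 1 < q < ∞, and let 𝓜 be a family of Borel measures on X with mod_q 𝓜 < ∞. Suppose ρ and φ are q-integrable Borel functions X → [0, ∞], each q-weakly admissible for 𝓜, and suppose ∫_X ρ^q dμ = mod_q 𝓜. Then mod_q 𝓜 ≤ ∫_X φ ρ^{q−1} dμ. -/
open MeasureTheory Metric Set ENNReal NNReal Filter Topology

noncomputable section

variable {X : Type*}

/-- A measure is Borel-regular: every set is contained in a Borel set of the same measure. -/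
def BorelRegular [MeasurableSpace X] (μ : Measure X) : Prop :=
  ∀ s : Set X, ∃ t : Set X, MeasurableSet t ∧ s ⊆ t ∧ μ t = μ s

/-- μ is doubling with constant `Cμ`: `0 < μ(2B) ≤ Cμ μ(B) < ∞` for all balls. -/
def IsDoublingWith [PseudoMetricSpace X] [MeasurableSpace X] (μ : Measure X) (Cμ : ℝ) : Prop :=
  ∀ (x : X) (r : ℝ), 0 < r →
    0 < μ (ball x (2 * r)) ∧ μ (ball x (2 * r)) ≤ ENNReal.ofReal Cμ * μ (ball x r) ∧
      μ (ball x r) < ⊤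

/-- `ρ` is an upper gradient of `u` on the set `V`: for every `L ≥ 0` and every
1-Lipschitz curve `γ : [0, L] → V`, `|u(γ L) − u(γ 0)| ≤ ∫₀^L ρ(γ t) dt`. -/
def IsUpperGradientOn [PseudoMetricSpace X] (u : X → ℝ) (ρ : X → ℝ≥0∞) (V : Set X) : Prop :=
  ∀ L : ℝ, 0 ≤ L → ∀ γ : ℝ → X, LipschitzOnWith 1 γ (Icc 0 L) → MapsTo γ (Icc 0 L) V →
    ENNReal.ofReal |u (γ L) - u (γ 0)| ≤ ∫⁻ t in Icc 0 L, ρ (γ t)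

/-- `X` supports a weak `p`-Poincaré inequality with constants `CP`, `lP`. -/
def WeakPoincare [PseudoMetricSpace X] [MeasurableSpace X] (μ : Measure X)
    (p CP lP : ℝ) : Prop :=
  ∀ u : X → ℝ, LocallyIntegrable u μ →
    ∀ ρ : X → ℝ≥0∞, Measurable ρ → IsUpperGradientOn u ρ univ →
    ∀ (x : X) (r : ℝ), 0 < r →
      ENNReal.ofReal (⨍ y in ball x r, |u y - ⨍ z in ball x r, u z ∂μ| ∂μ) ≤
        ENNReal.ofReal (CP * diam (ball x r)) *
          (⨍⁻ y in ball x (lP * r), ρ y ^ p ∂μ) ^ (1 / p)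

/-- `X` is Ahlfors `Q`-regular with constants `0 < a ≤ A`. -/
def AhlforsRegular [PseudoMetricSpace X] [MeasurableSpace X] (μ : Measure X)
    (Q a A : ℝ) : Prop :=
  0 < a ∧ a ≤ A ∧ ∀ (x : X) (r : ℝ), 0 < r → ENNReal.ofReal r < EMetric.diam (univ : Set X) →
    ENNReal.ofReal (a * r ^ Q) ≤ μ (ball x r) ∧ μ (ball x r) ≤ ENNReal.ofReal (A * r ^ Q)

/-- `ρ` is admissible for a family `M` of Borel measures: `∫ ρ dν ≥ 1` for all `ν ∈ M`. -/
def Admissible [MeasurableSpace X] (M : Set (Measure X)) (ρ : X → ℝ≥0∞) : Prop :=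
  Measurable ρ ∧ ∀ ν ∈ M, 1 ≤ ∫⁻ x, ρ x ∂ν

/-- The `q`-modulus of a family of Borel measures. -/
def modulus [MeasurableSpace X] (μ : Measure X) (q : ℝ) (M : Set (Measure X)) : ℝ≥0∞ :=
  ⨅ (ρ : X → ℝ≥0∞) (_ : Admissible M ρ), ∫⁻ x, ρ x ^ q ∂μ

/-- `ρ` is `q`-weakly admissible for `M`. -/
def WeaklyAdmissible [MeasurableSpace X] (μ : Measure X) (q : ℝ) (M : Set (Measure X))
    (ρ : X → ℝ≥0∞) : Prop :=
  ∃ N ⊆ M, modulus μ q N = 0 ∧ Admissible (M \ N) ρ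

/-- The family `Γ(E, F; G)` of measures `H¹` restricted to images of injective rectifiable
curves joining `E` and `F` in `G`. -/
def pathFamily [MetricSpace X] [MeasurableSpace X] [BorelSpace X] (E F G : Set X) :
    Set (Measure X) :=
  {ν | ∃ γ : ℝ → X, ContinuousOn γ (Icc 0 1) ∧ InjOn γ (Icc 0 1) ∧
    eVariationOn γ (Icc 0 1) ≠ ⊤ ∧ MapsTo γ (Icc 0 1) G ∧ γ 0 ∈ E ∧ γ 1 ∈ F ∧
    ν = (μH[1]).restrict (γ '' Icc 0 1)}

/-- `S` separates `E` from `F` in `G`: they lie in different connected components of `G \ S`. -/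
def SeparatesIn [TopologicalSpace X] (S E F G : Set X) : Prop :=
  ∃ x ∈ G \ S, ∃ y ∈ G \ S,
    E ⊆ connectedComponentIn (G \ S) x ∧ F ⊆ connectedComponentIn (G \ S) y ∧
    connectedComponentIn (G \ S) x ≠ connectedComponentIn (G \ S) y

/-- The family `Γ*(E, F; G)` of measures `H^d` restricted to `S ∩ G`, where `S` ranges over
compact subsets of the closure of `G`, of finite `H^d`-measure in `G`, separating `E` and `F`. -/
def surfaceFamilyH [MetricSpace X] [MeasurableSpace X] [BorelSpace X] (d : ℝ)
    (E F G : Set X) : Set (Measure X) :=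
  {ν | ∃ S : Set X, IsCompact S ∧ S ⊆ closure G ∧ μH[d] (S ∩ G) ≠ ⊤ ∧
    SeparatesIn S E F G ∧ ν = (μH[d]).restrict (S ∩ G)}

/-- The codimension-1 spherical Hausdorff measure associated to `μ`. -/
def codimOneHausdorff [PseudoMetricSpace X] [MeasurableSpace X] (μ : Measure X)
    (A : Set X) : ℝ≥0∞ :=
  ⨆ (δ : ℝ) (_ : 0 < δ),
    ⨅ (c : ℕ → X) (r : ℕ → ℝ) (_ : A ⊆ ⋃ i, ball (c i) (r i))
      (_ : ∀ i, 0 < r i ∧ r i ≤ δ), ∑' i, μ (ball (c i) (r i)) / ENNReal.ofReal (r i)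

/-- The integral `∫_A g d𝓗` of `g` over `A` against the codimension-1 spherical Hausdorff
measure, defined by the layer-cake formula. -/
def codimIntegral [PseudoMetricSpace X] [MeasurableSpace X] (μ : Measure X) (A : Set X)
    (g : X → ℝ≥0∞) : ℝ≥0∞ :=
  ∫⁻ s in Ioi (0 : ℝ), codimOneHausdorff μ (A ∩ {x | ENNReal.ofReal s < g x})

/-- The collection of "surfaces" of `Γ*(E, F; G)`: compact subsets of the closure of `G` of
finite codimension-1 measure in `G` separating `E` and `F` in `G`. -/
def surfaceSets [PseudoMetricSpace X] [MeasurableSpace X] (μ : Measure X) (E F G : Set X) :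
    Set (Set X) :=
  {S | IsCompact S ∧ S ⊆ closure G ∧ codimOneHausdorff μ (S ∩ G) ≠ ⊤ ∧ SeparatesIn S E F G}

/-- The `q`-modulus of a family `𝒮` of surfaces, each equipped with the codimension-1
spherical Hausdorff measure restricted to `S ∩ G`. -/
def surfModulus [PseudoMetricSpace X] [MeasurableSpace X] (μ : Measure X) (q : ℝ)
    (𝒮 : Set (Set X)) (G : Set X) : ℝ≥0∞ :=
  ⨅ (ρ : X → ℝ≥0∞)
    (_ : Measurable ρ ∧ ∀ S ∈ 𝒮, 1 ≤ codimIntegral μ (S ∩ G) ρ),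
    ∫⁻ x, ρ x ^ q ∂μ

/-- The upper Lebesgue integral of `f` over `s ⊆ ℝ`. -/
def upperIntegralOn (s : Set ℝ) (f : ℝ → ℝ≥0∞) : ℝ≥0∞ :=
  ⨅ (ψ : ℝ → ℝ≥0∞) (_ : Measurable ψ ∧ ∀ t, f t ≤ ψ t), ∫⁻ t in s, ψ t

/-- The restricted Hardy–Littlewood maximal function `M_R w`. -/
def restrMaximal [PseudoMetricSpace X] [MeasurableSpace X] (μ : Measure X) (R : ℝ)
    (w : X → ℝ≥0∞) (x : X) : ℝ≥0∞ :=
  ⨆ (r : ℝ) (_ : 0 < r ∧ r ≤ R), ⨍⁻ y in ball x r, w y ∂μ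

/-- `x` is a Lebesgue point of `v`. -/
def LebesguePoint [PseudoMetricSpace X] [MeasurableSpace X] (μ : Measure X) (v : X → ℝ)
    (x : X) : Prop :=
  Tendsto (fun r : ℝ => ⨍ y in ball x r, |v y - v x| ∂μ) (𝓝[>] 0) (𝓝 0)

/-- `u` is locally Lipschitz on `G`. -/
def IsLocallyLipschitzOn [PseudoMetricSpace X] (u : X → ℝ) (G : Set X) : Prop :=
  ∀ x ∈ G, ∃ (K : ℝ≥0) (t : Set X), t ∈ 𝓝[G] x ∧ LipschitzOnWith K u t

/-- `X` is a geodesic metric space. -/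
def IsGeodesicSpace (X : Type*) [MetricSpace X] : Prop :=
  ∀ x y : X, ∃ γ : ℝ → X, γ 0 = x ∧ γ (dist x y) = y ∧
    ∀ s ∈ Icc (0 : ℝ) (dist x y), ∀ t ∈ Icc (0 : ℝ) (dist x y), dist (γ s) (γ t) = |s - t|

/-- `G` is a domain (open connected set) with compact closure. -/
def IsDomainWithCompactClosure [TopologicalSpace X] (G : Set X) : Prop :=
  IsOpen G ∧ IsConnected G ∧ IsCompact (closure G)

/-- `E` is a nondegenerate continuum: compact, connected, with at least two points. -/
def IsNondegContinuum [TopologicalSpace X] (E : Set X) : Prop :=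
  IsCompact E ∧ IsConnected E ∧ E.Nontrivial

/-- The distance between two sets. -/
def setDist [PseudoMetricSpace X] (E F : Set X) : ℝ :=
  sInf ((fun p : X × X => dist p.1 p.2) '' (E ×ˢ F))

/-- The `s`-dimensional Hausdorff content. -/
def hContent {Y : Type*} [EMetricSpace Y] (s : ℝ) (E : Set Y) : ℝ≥0∞ :=
  ⨅ (U : ℕ → Set Y) (_ : E ⊆ ⋃ i, U i), ∑' i, EMetric.diam (U i) ^ s

end

/-!
For `t ∈ (0, 1]` the combination `ρₜ = (1 - t) ρ + t φ` is again weakly admissible, so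
minimality of `ρ` and the convexity bound `(u + v) ^ q ≤ u ^ q + q v (u + v) ^ (q - 1)` give
`mod ≤ ∫ ρₜ ^ q ≤ (1 - t) ^ q mod + q t ∫ φ ρₜ ^ (q - 1)`.
As `1 - (1 - t) ^ q ≥ q t (1 - t) ^ (q - 1)`, this yields `(1 - t) ^ (q - 1) mod ≤ ∫ φ ρₜ ^ (q - 1)`;
let `t → 0` by dominated convergence, with dominating function `(ρ + φ) ^ q`.
-/

theorem Real.rpow_add_mul_rpow_sub_one_mul_sub_le_rpow {q x y : ℝ} (hq : 1 ≤ q) (hx : 0 ≤ x)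
    (hy : 0 ≤ y) : y ^ q + q * y ^ (q - 1) * (x - y) ≤ x ^ q := by
  rcases hy.eq_or_lt with rfl | hy
  · rcases hq.eq_or_lt with rfl | hq
    · simp
    · simp [Real.zero_rpow (by linarith : q ≠ 0), Real.zero_rpow (by linarith : q - 1 ≠ 0),
        Real.rpow_nonneg hx]
  · -- Bernoulli's inequality at `x / y - 1`, rescaled by `y ^ q`
    have hbern := one_add_mul_self_le_rpow_one_add (s := x / y - 1) (by
      have : 0 ≤ x / y := div_nonneg hx hy.le
      linarith) hq
    rw [add_sub_cancel, Real.div_rpow hx hy.le, le_div_iff₀ (Real.rpow_pos_of_pos hy q)] at hbern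
    have hyq : y ^ q = y ^ (q - 1) * y := by
      rw [← Real.rpow_add_one hy.ne', sub_add_cancel]
    calc y ^ q + q * y ^ (q - 1) * (x - y) = (1 + q * (x / y - 1)) * y ^ q := by
          rw [hyq]; field_simp
      _ ≤ x ^ q := hbern

theorem ENNReal.add_rpow_le_rpow_add_mul_mul_add_rpow_sub_one {q : ℝ} (hq : 1 ≤ q)
    (u v : ℝ≥0∞) : (u + v) ^ q ≤ u ^ q + ENNReal.ofReal q * v * (u + v) ^ (q - 1) := by
  have hq0 : 0 < q := by linarith
  rcases eq_top_or_lt_top v with rfl | hv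
  · have htop : (⊤ : ℝ≥0∞) ^ (q - 1) ≠ 0 := by simp [ENNReal.rpow_eq_zero_iff, hq]
    rw [add_top, ENNReal.mul_top (ENNReal.ofReal_pos.2 hq0).ne', ENNReal.top_mul htop, add_top]
    exact le_top
  rcases eq_top_or_lt_top u with rfl | hu
  · simp [ENNReal.top_rpow_of_pos hq0]
  lift u to ℝ≥0 using hu.ne
  lift v to ℝ≥0 using hv.ne
  rw [← ENNReal.coe_add, ← ENNReal.coe_rpow_of_nonneg _ hq0.le,
    ← ENNReal.coe_rpow_of_nonneg _ hq0.le, ← ENNReal.coe_rpow_of_nonneg _ (sub_nonneg.2 hq),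
    ENNReal.ofReal, ← ENNReal.coe_mul,
    ← ENNReal.coe_mul, ← ENNReal.coe_add, ENNReal.coe_le_coe, ← NNReal.coe_le_coe]
  have := Real.rpow_add_mul_rpow_sub_one_mul_sub_le_rpow hq u.coe_nonneg
    (add_nonneg u.coe_nonneg v.coe_nonneg)
  simp only [NNReal.coe_add, NNReal.coe_mul, NNReal.coe_rpow, Real.coe_toNNReal _ hq0.le]
  linear_combination this

section Modulus

variable {X : Type*} [MeasurableSpace X] {μ : Measure X} {q : ℝ} {M N : Set (Measure X)}
  {ρ φ : X → ℝ≥0∞}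

theorem Admissible.mono (hNM : N ⊆ M) (h : Admissible M ρ) : Admissible N ρ :=
  ⟨h.1, fun ν hν => h.2 ν (hNM hν)⟩

theorem Admissible.union_sup (hM : Admissible M ρ) (hN : Admissible N φ) :
    Admissible (M ∪ N) (ρ ⊔ φ) := by
  refine ⟨hM.1.sup hN.1, fun ν hν => ?_⟩
  rcases hν with hν | hν
  · exact (hM.2 ν hν).trans (lintegral_mono fun x => le_sup_left)
  · exact (hN.2 ν hν).trans (lintegral_mono fun x => le_sup_right)

theorem Admissible.modulus_le (h : Admissible M ρ) : modulus μ q M ≤ ∫⁻ x, ρ x ^ q ∂μ :=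
  iInf₂_le ρ h

theorem modulus_mono (hNM : N ⊆ M) : modulus μ q N ≤ modulus μ q M :=
  le_iInf₂ fun _ hρ => (hρ.mono hNM).modulus_le

theorem modulus_union_le : modulus μ q (M ∪ N) ≤ modulus μ q M + modulus μ q N := by
  simp only [modulus, ENNReal.iInf_add, ENNReal.add_iInf]
  refine le_iInf₂ fun φ hφ => le_iInf₂ fun ρ hρ => ?_
  calc _ ≤ ∫⁻ x, (ρ x ⊔ φ x) ^ q ∂μ := (hρ.union_sup hφ).modulus_le
    _ ≤ ∫⁻ x, (ρ x ^ q + φ x ^ q) ∂μ := lintegral_mono fun x => by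
        rcases le_total (ρ x) (φ x) with h | h
        · rw [sup_eq_right.2 h]; exact le_add_self
        · rw [sup_eq_left.2 h]; exact le_self_add
    _ = ∫⁻ x, ρ x ^ q ∂μ + ∫⁻ x, φ x ^ q ∂μ :=
        lintegral_add_left (hρ.1.pow_const q) _

theorem WeaklyAdmissible.measurable (h : WeaklyAdmissible μ q M ρ) : Measurable ρ :=
  let ⟨_, _, _, hρ⟩ := h
  hρ.1

theorem WeaklyAdmissible.modulus_le (h : WeaklyAdmissible μ q M ρ) :
    modulus μ q M ≤ ∫⁻ x, ρ x ^ q ∂μ := by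
  obtain ⟨N, hNM, hN, hρ⟩ := h
  calc modulus μ q M ≤ modulus μ q ((M \ N) ∪ N) := modulus_mono (by simp)
    _ ≤ modulus μ q (M \ N) + modulus μ q N := modulus_union_le
    _ ≤ ∫⁻ x, ρ x ^ q ∂μ := by rw [hN, add_zero]; exact hρ.modulus_le

theorem WeaklyAdmissible.mul_add_mul (hρ : WeaklyAdmissible μ q M ρ)
    (hφ : WeaklyAdmissible μ q M φ) {a b : ℝ≥0∞} (hab : 1 ≤ a + b) :
    WeaklyAdmissible μ q M (fun x => a * ρ x + b * φ x) := by
  obtain ⟨N₁, hN₁M, hN₁, hρ⟩ := hρ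
  obtain ⟨N₂, hN₂M, hN₂, hφ⟩ := hφ
  refine ⟨N₁ ∪ N₂, union_subset hN₁M hN₂M,
    le_antisymm (modulus_union_le.trans_eq (by rw [hN₁, hN₂, add_zero])) bot_le,
    (hρ.1.const_mul a).add (hφ.1.const_mul b), fun ν hν => ?_⟩
  have hρν := (hρ.mono (sdiff_subset_sdiff_right subset_union_left)).2 ν hν
  have hφν := (hφ.mono (sdiff_subset_sdiff_right subset_union_right)).2 ν hν
  calc 1 ≤ a * 1 + b * 1 := by simpa using hab
    _ ≤ a * ∫⁻ x, ρ x ∂ν + b * ∫⁻ x, φ x ∂ν := by gcongr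
    _ = ∫⁻ x, a * ρ x + b * φ x ∂ν := by
        rw [lintegral_add_left (hρ.1.const_mul a), lintegral_const_mul _ hρ.1,
          lintegral_const_mul _ hφ.1]

end Modulus

section Variation

variable {X : Type*} [MeasurableSpace X] {μ : Measure X} {q : ℝ} {M : Set (Measure X)}
  {ρ φ : X → ℝ≥0∞}

theorem ofReal_rpow_mul_modulus_le_lintegral_mul_rpow (hq : 1 ≤ q) (hM : modulus μ q M ≠ ⊤)
    (hρ : WeaklyAdmissible μ q M ρ) (hφ : WeaklyAdmissible μ q M φ)
    (hmin : ∫⁻ x, ρ x ^ q ∂μ = modulus μ q M) {t : ℝ} (ht₀ : 0 < t) (ht₁ : t ≤ 1) :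
    ENNReal.ofReal ((1 - t) ^ (q - 1)) * modulus μ q M ≤
      ∫⁻ x, φ x * (ENNReal.ofReal (1 - t) * ρ x + ENNReal.ofReal t * φ x) ^ (q - 1) ∂μ := by
  have hq₀ : 0 < q := by linarith
  have hρm := hρ.measurable
  have hφm := hφ.measurable
  set A := modulus μ q M
  set a := ENNReal.ofReal (1 - t)
  set b := ENNReal.ofReal t
  set c := fun x => a * ρ x + b * φ x
  set J := ∫⁻ x, φ x * c x ^ (q - 1) ∂μ
  have hc : WeaklyAdmissible μ q M c :=
    hρ.mul_add_mul hφ (by rw [← ENNReal.ofReal_add (by linarith) ht₀.le]; simp)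
  have hupper : A ≤ a ^ q * A + ENNReal.ofReal q * b * J :=
    calc A ≤ ∫⁻ x, c x ^ q ∂μ := hc.modulus_le
      _ ≤ ∫⁻ x, a ^ q * ρ x ^ q + ENNReal.ofReal q * b * (φ x * c x ^ (q - 1)) ∂μ :=
        lintegral_mono fun x => by
          have := ENNReal.add_rpow_le_rpow_add_mul_mul_add_rpow_sub_one hq (a * ρ x) (b * φ x)
          rw [ENNReal.mul_rpow_of_nonneg _ _ hq₀.le] at this
          exact this.trans_eq (by ring)
      _ = a ^ q * A + ENNReal.ofReal q * b * J := by
        rw [lintegral_add_left ((hρm.pow_const q).const_mul _),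
          lintegral_const_mul _ (hρm.pow_const q), lintegral_const_mul _ (by fun_prop), hmin]
  -- the tangent line of `s ↦ s ^ q` at `1 - t`, evaluated at `1`
  have hscalar : ENNReal.ofReal q * b * ENNReal.ofReal ((1 - t) ^ (q - 1)) + a ^ q ≤ 1 := by
    have := Real.rpow_add_mul_rpow_sub_one_mul_sub_le_rpow hq zero_le_one (sub_nonneg.2 ht₁)
    rw [ENNReal.ofReal_rpow_of_nonneg (sub_nonneg.2 ht₁) hq₀.le, ← ENNReal.ofReal_mul hq₀.le,
      ← ENNReal.ofReal_mul (by positivity), ← ENNReal.ofReal_add (by positivity) (by positivity),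
      ← ENNReal.ofReal_one]
    refine ENNReal.ofReal_le_ofReal ?_
    rw [Real.one_rpow] at this
    linarith
  have hcancel : ENNReal.ofReal q * b * (ENNReal.ofReal ((1 - t) ^ (q - 1)) * A) + a ^ q * A ≤
      ENNReal.ofReal q * b * J + a ^ q * A :=
    calc _ = (ENNReal.ofReal q * b * ENNReal.ofReal ((1 - t) ^ (q - 1)) + a ^ q) * A := by ring
      _ ≤ 1 * A := by gcongr
      _ ≤ _ := by rw [one_mul, add_comm]; exact hupper
  have hfin : a ^ q * A ≠ ⊤ := ENNReal.mul_ne_top (ENNReal.rpow_ne_top_of_nonneg hq₀.le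
    ENNReal.ofReal_ne_top) hM
  have hqb : ENNReal.ofReal q * b ≠ 0 := by positivity
  exact (ENNReal.mul_le_mul_iff_right hqb (by finiteness)).1
    ((ENNReal.add_le_add_iff_right hfin).1 hcancel)

theorem tendsto_lintegral_mul_rpow_sub_one_nhdsGT_zero (hq : 1 ≤ q) (hρm : Measurable ρ)
    (hφm : Measurable φ) (hρint : ∫⁻ x, ρ x ^ q ∂μ ≠ ⊤) (hφint : ∫⁻ x, φ x ^ q ∂μ ≠ ⊤) :
    Tendsto (fun t : ℝ =>
        ∫⁻ x, φ x * (ENNReal.ofReal (1 - t) * ρ x + ENNReal.ofReal t * φ x) ^ (q - 1) ∂μ)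
      (𝓝[>] 0) (𝓝 (∫⁻ x, φ x * ρ x ^ (q - 1) ∂μ)) := by
  have hq₀ : 0 < q := by linarith
  have hq₁ : 0 ≤ q - 1 := by linarith
  refine tendsto_lintegral_filter_of_dominated_convergence (fun x => (ρ x + φ x) ^ q)
    (Eventually.of_forall fun t => by fun_prop) ?_
    (lintegral_rpow_add_lt_top_of_lintegral_rpow_lt_top hρm.aemeasurable hρint.lt_top
      hφint.lt_top hq).ne ?_
  · filter_upwards [Ioo_mem_nhdsGT one_pos] with t ht
    refine Eventually.of_forall fun x => ?_
    have hc : ENNReal.ofReal (1 - t) * ρ x + ENNReal.ofReal t * φ x ≤ ρ x + φ x := by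
      gcongr <;> refine mul_le_of_le_one_left' (ENNReal.ofReal_le_one.2 ?_) <;>
        linarith [ht.1, ht.2]
    calc φ x * (ENNReal.ofReal (1 - t) * ρ x + ENNReal.ofReal t * φ x) ^ (q - 1)
        ≤ (ρ x + φ x) ^ (1 : ℝ) * (ρ x + φ x) ^ (q - 1) := by
          rw [ENNReal.rpow_one]; gcongr; exact le_add_self
      _ = (ρ x + φ x) ^ q := by
          rw [← ENNReal.rpow_add_of_nonneg _ _ zero_le_one hq₁, add_sub_cancel]
  · have hφfin : ∀ᵐ x ∂μ, φ x ^ q < ⊤ := ae_lt_top (hφm.pow_const q) hφint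
    filter_upwards [hφfin] with x hx
    have hφx : φ x ≠ ⊤ := fun h => by simp [h, ENNReal.top_rpow_of_pos hq₀] at hx
    have h₁ : Tendsto (fun t : ℝ => ENNReal.ofReal (1 - t)) (𝓝 0) (𝓝 1) := by
      simpa using ENNReal.tendsto_ofReal
        ((tendsto_const_nhds (x := (1 : ℝ))).sub (tendsto_id (x := 𝓝 (0 : ℝ))))
    have h₀ : Tendsto (fun t : ℝ => ENNReal.ofReal t) (𝓝 0) (𝓝 0) := by
      simpa using ENNReal.tendsto_ofReal (tendsto_id (x := 𝓝 (0 : ℝ)))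
    have hc : Tendsto (fun t : ℝ => ENNReal.ofReal (1 - t) * ρ x + ENNReal.ofReal t * φ x)
        (𝓝 0) (𝓝 (ρ x)) := by
      simpa using (ENNReal.Tendsto.mul_const h₁ (Or.inl one_ne_zero)).add
        (ENNReal.Tendsto.mul_const h₀ (Or.inr hφx))
    exact (ENNReal.Tendsto.const_mul ((ENNReal.continuous_rpow_const.tendsto _).comp hc)
      (Or.inr hφx)).mono_left nhdsWithin_le_nhds

end Variation

theorem modulus_minimizer_variation_general {X : Type*} [MeasurableSpace X]
    (μ : Measure X) (q : ℝ) (hq : 1 < q)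
    (M : Set (Measure X)) (hM : modulus μ q M ≠ ⊤)
    (ρ φ : X → ℝ≥0∞)
    (hφint : (∫⁻ x, φ x ^ q ∂μ) ≠ ⊤)
    (hρ : WeaklyAdmissible μ q M ρ) (hφ : WeaklyAdmissible μ q M φ)
    (hmin : (∫⁻ x, ρ x ^ q ∂μ) = modulus μ q M) :
    modulus μ q M ≤ ∫⁻ x, φ x * ρ x ^ (q - 1) ∂μ := by
  have hρint : ∫⁻ x, ρ x ^ q ∂μ ≠ ⊤ := hmin ▸ hM
  have hweight : Tendsto (fun t : ℝ => (1 - t) ^ (q - 1)) (𝓝 0) (𝓝 1) := by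
    simpa using (((continuous_const (y := (1 : ℝ))).sub continuous_id).rpow_const
      fun _ => Or.inr (sub_nonneg.2 hq.le)).tendsto 0
  have hlower : Tendsto (fun t : ℝ => ENNReal.ofReal ((1 - t) ^ (q - 1)) * modulus μ q M)
      (𝓝[>] 0) (𝓝 (modulus μ q M)) := by
    simpa using (ENNReal.Tendsto.mul_const (ENNReal.tendsto_ofReal hweight)
      (Or.inr hM)).mono_left nhdsWithin_le_nhds
  refine le_of_tendsto_of_tendsto hlower (tendsto_lintegral_mul_rpow_sub_one_nhdsGT_zero hq.le
    hρ.measurable hφ.measurable hρint hφint) ?_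
  filter_upwards [Ioo_mem_nhdsGT one_pos] with t ht
  exact ofReal_rpow_mul_modulus_le_lintegral_mul_rpow hq.le hM hρ hφ hmin ht.1 ht.2.le

/-- Variational inequality for the modulus minimizer (Lemma 5.2 of Lohvansuu–Rajala). -/
theorem modulus_minimizer_variation {X : Type*} [MetricSpace X] [MeasurableSpace X]
    (μ : Measure X) (hBR : BorelRegular μ) (q : ℝ) (hq : 1 < q)
    (M : Set (Measure X)) (hM : modulus μ q M ≠ ⊤)
    (ρ φ : X → ℝ≥0∞) (hρm : Measurable ρ) (hφm : Measurable φ)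
    (hρint : (∫⁻ x, ρ x ^ q ∂μ) ≠ ⊤) (hφint : (∫⁻ x, φ x ^ q ∂μ) ≠ ⊤)
    (hρ : WeaklyAdmissible μ q M ρ) (hφ : WeaklyAdmissible μ q M φ)
    (hmin : (∫⁻ x, ρ x ^ q ∂μ) = modulus μ q M) :
    modulus μ q M ≤ ∫⁻ x, φ x * ρ x ^ (q - 1) ∂μ :=
  modulus_minimizer_variation_general μ q hq M hM ρ φ hφint hρ hφ hmin
end

section
/- Let ε ∈ (0, 1), let c > 0, and let K ⊆ [1/4, 3/4] be a compact set such that 𝓗^{1−ε}_∞(K ∩ B(x, r)) ≥ c r^{1−ε} for all x ∈ K and 0 < r < 1. Then the set A = [1/4, 3/4] × K × {0} ⊂ ℝ³ satisfies 𝓗^{2−ε}_∞(A ∩ B(x, r)) ≥ C r^{2−ε} for all x ∈ A and 0 < r ≤ diam([0,1]³), where C > 0 depends only on c and ε. -/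
open MeasureTheory Metric Set ENNReal NNReal Filter Topology

/-!
Slice `A ∩ B(x, r)` by the planes `{p 0 = t}`. For `t` in an interval `I ⊆ [1/4, 3/4]` of
length `r / 4` within `r / 4` of `x 0`, the fibre `{t} × (K ∩ B(x 1, r / 4)) × {0}` is an
isometric copy of `K ∩ B(x 1, r / 4)` inside `A ∩ B(x, r)`. A cover `(U i)` of `A ∩ B(x, r)`
restricts to a cover of every such fibre, and `U i` meets the fibre over `t` only if `t` lies
in the projection of `U i` to the first coordinate, a set of length at most `diam (U i)`.
Integrating the fibrewise bound `c (r / 4) ^ (1 - ε) ≤ ∑ diam (U i) ^ (1 - ε)` over `t ∈ I`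
gives `c (r / 4) ^ (1 - ε) * (r / 4) ≤ ∑ diam (U i) ^ (2 - ε)`.
-/

section HausdorffContent

variable {Y Z : Type*} [EMetricSpace Y] [EMetricSpace Z] {s : ℝ}

theorem hContent_le_tsum {E : Set Y} {U : ℕ → Set Y} (hU : E ⊆ ⋃ i, U i) :
    hContent s E ≤ ∑' i, ediam (U i) ^ s :=
  iInf₂_le U hU

theorem le_hContent {E : Set Y} {a : ℝ≥0∞}
    (h : ∀ U : ℕ → Set Y, E ⊆ ⋃ i, U i → a ≤ ∑' i, ediam (U i) ^ s) : a ≤ hContent s E :=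
  le_iInf₂ h

theorem volume_closure_image_le_ediam {π : Z → ℝ} (hπ : LipschitzWith 1 π) (U : Set Z) :
    volume (closure (π '' U)) ≤ ediam U := by
  calc volume (closure (π '' U)) ≤ ediam (closure (π '' U)) := Real.volume_le_diam _
    _ = ediam (π '' U) := ediam_closure _
    _ ≤ ediam U := by simpa using hπ.ediam_image_le U

theorem hContent_le_tsum_indicator_of_isometry (hs : 0 < s) {π : Z → ℝ} {f : Y → Z}
    (hf : Isometry f) {t : ℝ} (hπf : ∀ y, π (f y) = t) {F : Set Y} {U : ℕ → Set Z}
    (hU : f '' F ⊆ ⋃ i, U i) :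
    hContent s F ≤ ∑' i, (closure (π '' U i)).indicator (fun _ ↦ ediam (U i) ^ s) t := by
  refine (hContent_le_tsum (U := fun i ↦ f ⁻¹' U i) ?_).trans (ENNReal.tsum_le_tsum fun i ↦ ?_)
  · simpa [image_subset_iff] using hU
  rcases (f ⁻¹' U i).eq_empty_or_nonempty with hempty | ⟨y, hy⟩
  · simp [hempty, ENNReal.zero_rpow_of_pos hs]
  have ht : t ∈ closure (π '' U i) := subset_closure ⟨f y, hy, hπf y⟩
  rw [indicator_of_mem ht, ← hf.ediam_image]
  gcongr
  exact image_preimage_subset f (U i)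

theorem hContent_mul_volume_le_hContent_add_one (hs : 0 < s) {π : Z → ℝ}
    (hπ : LipschitzWith 1 π) {f : ℝ → Y → Z} (hf : ∀ t, Isometry (f t))
    (hπf : ∀ t y, π (f t y) = t) {I : Set ℝ} {F : Set Y} {E : Set Z}
    (hFE : ∀ t ∈ I, MapsTo (f t) F E) :
    hContent s F * volume I ≤ hContent (s + 1) E := by
  refine le_hContent fun U hU ↦ ?_
  set g : ℕ → ℝ → ℝ≥0∞ := fun i ↦ (closure (π '' U i)).indicator fun _ ↦ ediam (U i) ^ s
  have hg i : Measurable (g i) := measurable_const.indicator isClosed_closure.measurableSet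
  calc hContent s F * volume I = ∫⁻ _ in I, hContent s F := (setLIntegral_const _ _).symm
    _ ≤ ∫⁻ t in I, ∑' i, g i t := setLIntegral_mono (Measurable.tsum hg) fun t ht ↦
        hContent_le_tsum_indicator_of_isometry hs (hf t) (hπf t) ((hFE t ht).image_subset.trans hU)
    _ ≤ ∫⁻ t, ∑' i, g i t := setLIntegral_le_lintegral _ _
    _ = ∑' i, ediam (U i) ^ s * volume (closure (π '' U i)) := by
        rw [lintegral_tsum fun i ↦ (hg i).aemeasurable]
        simp only [g, lintegral_indicator_const isClosed_closure.measurableSet]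
    _ ≤ ∑' i, ediam (U i) ^ s * ediam (U i) := by
        gcongr with i
        exact volume_closure_image_le_ediam hπ (U i)
    _ = ∑' i, ediam (U i) ^ (s + 1) := by
        simp only [ENNReal.rpow_add_of_nonneg _ _ hs.le zero_le_one, ENNReal.rpow_one]

end HausdorffContent

section Euclidean

theorem lipschitzWith_euclidean_apply {ι : Type*} [Fintype ι] (i : ι) :
    LipschitzWith 1 fun p : EuclideanSpace ℝ ι ↦ p i := by
  have h := (LipschitzWith.eval (α := fun _ : ι ↦ ℝ) i).comp (PiLp.lipschitzWith_ofLp 2 _)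
  rwa [mul_one] at h

theorem diam_unitCube_le {ι : Type*} [Fintype ι] :
    diam {p : EuclideanSpace ℝ ι | ∀ i, p i ∈ Icc (0 : ℝ) 1} ≤ √(Fintype.card ι) := by
  refine diam_le_of_forall_dist_le (Real.sqrt_nonneg _) fun p hp q hq ↦ ?_
  rw [EuclideanSpace.dist_eq]
  gcongr
  calc ∑ i, dist (p i) (q i) ^ 2 ≤ ∑ _i : ι, (1 : ℝ) := by
        gcongr with i
        exact pow_le_one₀ dist_nonneg (Real.dist_le_of_mem_Icc_01 (hp i) (hq i))
    _ = Fintype.card ι := by simp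

theorem sq_dist_toLp_eq (t y : ℝ) (x : EuclideanSpace ℝ (Fin 3)) :
    dist !₂[t, y, 0] x ^ 2 = dist t (x 0) ^ 2 + dist y (x 1) ^ 2 + x 2 ^ 2 := by
  rw [EuclideanSpace.dist_eq, Real.sq_sqrt (by positivity), Fin.sum_univ_three]
  simp [Real.dist_eq]

theorem isometry_toLp_slice (t : ℝ) : Isometry fun y : ℝ ↦ !₂[t, y, 0] :=
  Isometry.of_dist_eq fun y y' ↦ by
    rw [← sq_eq_sq₀ dist_nonneg dist_nonneg, sq_dist_toLp_eq]
    simp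

theorem mapsTo_toLp_slice {J K : Set ℝ} {x : EuclideanSpace ℝ (Fin 3)} (hx : x 2 = 0)
    {r t : ℝ} (hr : 0 < r) (ht : t ∈ J) (htx : dist t (x 0) ≤ r / 4) :
    MapsTo (fun y ↦ !₂[t, y, 0]) (K ∩ ball (x 1) (r / 4))
      ({p | p 0 ∈ J ∧ p 1 ∈ K ∧ p 2 = 0} ∩ ball x r) := by
  rintro y ⟨hyK, hyx⟩
  refine ⟨⟨by simpa using ht, by simpa using hyK, by simp⟩, ?_⟩
  rw [mem_ball] at hyx ⊢
  refine lt_of_pow_lt_pow_left₀ 2 hr.le ?_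
  rw [sq_dist_toLp_eq, hx]
  nlinarith [dist_nonneg (x := t) (y := x 0), dist_nonneg (x := y) (y := x 1)]

end Euclidean

theorem exists_Icc_subset_Icc_inter_closedBall {u v x m : ℝ} (hx : x ∈ Icc u v) (hm : 0 ≤ m)
    (hmuv : m ≤ v - u) : ∃ a, Icc a (a + m) ⊆ Icc u v ∩ closedBall x m := by
  refine ⟨min x (v - m), fun t ht ↦ ?_⟩
  simp only [Real.closedBall_eq_Icc, mem_inter_iff, mem_Icc] at hx ht ⊢
  rcases min_cases x (v - m) with ⟨hmin, hle⟩ | ⟨hmin, hlt⟩ <;>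
    rw [hmin] at ht <;> refine ⟨⟨?_, ?_⟩, ?_, ?_⟩ <;> linarith

/-- Hausdorff content estimate for the product of an interval and a Cantor-type set
(Section 6 of Lohvansuu–Rajala). -/
theorem product_hausdorff_content_bound :
    ∀ ε c : ℝ, 0 < ε → ε < 1 → 0 < c →
    ∃ C : ℝ, 0 < C ∧ ∀ K : Set ℝ, IsCompact K → K ⊆ Icc (1 / 4 : ℝ) (3 / 4) →
      (∀ x ∈ K, ∀ r : ℝ, 0 < r → r < 1 →
        ENNReal.ofReal (c * r ^ (1 - ε)) ≤ hContent (1 - ε) (K ∩ ball x r)) →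
      ∀ A : Set (EuclideanSpace ℝ (Fin 3)),
        A = {p | p 0 ∈ Icc (1 / 4 : ℝ) (3 / 4) ∧ p 1 ∈ K ∧ p 2 = 0} →
        ∀ x ∈ A, ∀ r : ℝ, 0 < r →
          r ≤ diam {p : EuclideanSpace ℝ (Fin 3) | ∀ i, p i ∈ Icc (0 : ℝ) 1} →
          ENNReal.ofReal (C * r ^ (2 - ε)) ≤ hContent (2 - ε) (A ∩ ball x r) := by
  rintro ε c - hε1 hc
  refine ⟨c / 4 ^ (2 - ε), by positivity, ?_⟩
  rintro K - - hK A rfl x ⟨hx0, hx1, hx2⟩ r hr hr_diam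
  have hr2 : r ≤ 2 := hr_diam.trans <| diam_unitCube_le.trans <| by
    rw [Real.sqrt_le_left (by norm_num)]; norm_num
  obtain ⟨a, haI⟩ := exists_Icc_subset_Icc_inter_closedBall hx0 (m := r / 4) (by positivity)
    (by linarith)
  have hslice := hContent_mul_volume_le_hContent_add_one (sub_pos.2 hε1)
    (lipschitzWith_euclidean_apply 0) isometry_toLp_slice (fun t y ↦ rfl)
    (I := Icc a (a + r / 4)) fun t ht ↦ mapsTo_toLp_slice (K := K) hx2 hr (haI ht).1 (haI ht).2
  rw [show 1 - ε + 1 = 2 - ε by ring, Real.volume_Icc, add_sub_cancel_left] at hslice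
  refine le_trans (le_of_eq ?_)
    ((mul_le_mul_left (hK _ hx1 _ (by positivity) (by linarith)) _).trans hslice)
  rw [← ENNReal.ofReal_mul (by positivity), mul_assoc, ← Real.rpow_add_one (by positivity),
    Real.div_rpow hr.le (by norm_num)]
  ring_nf
end
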